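/- arXiv:2203.01599 — 2 statements merged into one kernel-verified Lean document; each statement's English description precedes it below -/
import Mathlib

section
/- Let d = 2^ℓ and let ε, δ ∈ (0, 1/2). If m ≥ 4(log d + log(2/δ))/ε², then with probability at least 1 − δ over the random diagonal matrices, for all x, y ∈ ℝ^d, (1 − ε)·‖x − y‖ ≤ ‖h̃(x) − h̃(y)‖/√(md) ≤ (1 + ε)·‖x − y‖. -/
/-!
Since `Hᵀ H = d • 1`, the transform only rescales coordinates:
`‖h̃(z)‖² / (m d) = ∑ᵢ wᵢ zᵢ²` with `wᵢ = (1 / m) ∑ⱼ (D^j_ii)²`, a normalized chi-squared variable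
with `m` degrees of freedom. Hence the two-sided bound holds for all `x, y` at once as soon as
every `wᵢ` lies in `[(1 - ε)², (1 + ε)²]`. The Gaussian moment generating function
`E exp (t g²) = (1 - 2t)^(-1/2)` and the Chernoff bound control each of the two tails of each `wᵢ`
by `exp (-m ε² / 4)`, and a union bound over the `2d` tails gives failure probability
`2d exp (-m ε² / 4) ≤ δ`.
-/

open MeasureTheory ProbabilityTheory Real
open scoped ENNReal NNReal Classical

noncomputable section

/-- The Sylvester–Hadamard matrix of size `2^ℓ`: `H 0 = [1]`,
`H (ℓ+1) = [[H ℓ, H ℓ],[H ℓ, -H ℓ]]`. -/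
def Had : ∀ ℓ : ℕ, Matrix (Fin (2 ^ ℓ)) (Fin (2 ^ ℓ)) ℝ
  | 0 => 1
  | (ℓ + 1) =>
      Matrix.reindex (finSumFinEquiv.trans (finCongr (by rw [pow_succ, mul_two])))
        (finSumFinEquiv.trans (finCongr (by rw [pow_succ, mul_two])))
        (Matrix.fromBlocks (Had ℓ) (Had ℓ) (Had ℓ) (-(Had ℓ)))

/-- `rht ℓ m D z j k = (H_d D^j z)_k`, the `(j,k)` entry of the randomized Hadamard
transform of `z`, where `D j` records the diagonal entries of the diagonal matrix `D^j`. -/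
def rht (ℓ m : ℕ) (D : Fin m → Fin (2 ^ ℓ) → ℝ) (z : EuclideanSpace ℝ (Fin (2 ^ ℓ)))
    (j : Fin m) (k : Fin (2 ^ ℓ)) : ℝ :=
  (Had ℓ).mulVec (fun i => D j i * z i) k

/-- The joint law of the diagonal entries of `D^1, …, D^m`: i.i.d. standard Gaussians. -/
def diagMeasure (ℓ m : ℕ) : Measure (Fin m → Fin (2 ^ ℓ) → ℝ) :=
  Measure.pi fun _ => Measure.pi fun _ => gaussianReal 0 1

open Matrix

theorem Matrix.sum_sq_mulVec_of_transpose_mul_self {n : Type*} [Fintype n] [DecidableEq n]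
    {A : Matrix n n ℝ} {c : ℝ} (hA : Aᵀ * A = c • 1) (v : n → ℝ) :
    ∑ k, (A *ᵥ v) k ^ 2 = c * ∑ i, v i ^ 2 := by
  have h : v ⬝ᵥ ((Aᵀ * A) *ᵥ v) = (A *ᵥ v) ⬝ᵥ (A *ᵥ v) := by
    rw [← mulVec_mulVec, dotProduct_mulVec, vecMul_transpose]
  simpa [dotProduct, sq, hA, smul_mulVec, Finset.mul_sum, mul_left_comm] using h.symm

theorem Had_transpose_mul_self (ℓ : ℕ) : (Had ℓ)ᵀ * Had ℓ = (2 ^ ℓ : ℝ) • 1 := by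
  induction ℓ with
  | zero => simp [Had]
  | succ ℓ ih =>
    have hblocks : (fromBlocks (Had ℓ) (Had ℓ) (Had ℓ) (-Had ℓ))ᵀ *
        fromBlocks (Had ℓ) (Had ℓ) (Had ℓ) (-Had ℓ) = (2 ^ (ℓ + 1) : ℝ) • 1 := by
      rw [fromBlocks_transpose, fromBlocks_multiply, ← fromBlocks_one,
        fromBlocks_smul]
      simp only [transpose_neg, neg_mul, mul_neg, neg_neg, ih, pow_succ]
      congr 1 <;> module
    rw [Had, reindex_apply, transpose_submatrix, submatrix_mul_equiv,
      hblocks]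
    ext i j
    simp [one_apply]

theorem sum_sq_Had_mulVec (ℓ : ℕ) (v : Fin (2 ^ ℓ) → ℝ) :
    ∑ k, (Had ℓ *ᵥ v) k ^ 2 = 2 ^ ℓ * ∑ i, v i ^ 2 :=
  Matrix.sum_sq_mulVec_of_transpose_mul_self (Had_transpose_mul_self ℓ) v

theorem gaussianPDFReal_mul_exp_mul_sq (t x : ℝ) :
    gaussianPDFReal 0 1 x * exp (t * x ^ 2) = (√(2 * π))⁻¹ * exp (-(1 / 2 - t) * x ^ 2) := by
  rw [gaussianPDFReal]
  push_cast
  rw [mul_one, mul_assoc, ← exp_add]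
  ring_nf

theorem integrable_exp_mul_sq_gaussianReal {t : ℝ} (ht : t < 1 / 2) :
    Integrable (fun x => exp (t * x ^ 2)) (gaussianReal 0 1) := by
  rw [gaussianReal_of_var_ne_zero _ one_ne_zero,
    integrable_withDensity_iff_integrable_smul' (measurable_gaussianPDF 0 1)
      (ae_of_all _ fun _ => ENNReal.ofReal_lt_top)]
  simp_rw [gaussianPDF, ENNReal.toReal_ofReal (gaussianPDFReal_nonneg 0 1 _), smul_eq_mul,
    gaussianPDFReal_mul_exp_mul_sq]
  exact (integrable_exp_neg_mul_sq (by linarith)).const_mul _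

theorem integral_exp_mul_sq_gaussianReal {t : ℝ} (ht : t < 1 / 2) :
    ∫ x, exp (t * x ^ 2) ∂gaussianReal 0 1 = (1 - 2 * t) ^ (-(1 / 2) : ℝ) := by
  have h2t : 0 < 1 - 2 * t := by linarith
  simp_rw [integral_gaussianReal_eq_integral_smul one_ne_zero, smul_eq_mul,
    gaussianPDFReal_mul_exp_mul_sq, integral_const_mul, integral_gaussian]
  rw [rpow_neg h2t.le, ← sqrt_eq_rpow, show π / (1 / 2 - t) = 2 * π / (1 - 2 * t) by
    field_simp, sqrt_div (by positivity)]
  have : √(2 * π) ≠ 0 := by positivity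
  field_simp

section ChiSquared

variable {ι : Type*} [Fintype ι]

theorem exp_mul_sum_sq_eq_prod (t : ℝ) (x : ι → ℝ) :
    exp (t * ∑ j, x j ^ 2) = ∏ j, exp (t * x j ^ 2) := by
  rw [Finset.mul_sum, exp_sum]

theorem integrable_exp_mul_sum_sq_gaussian {t : ℝ} (ht : t < 1 / 2) :
    Integrable (fun x : ι → ℝ => exp (t * ∑ j, x j ^ 2))
      (Measure.pi fun _ => gaussianReal 0 1) := by
  simp_rw [exp_mul_sum_sq_eq_prod]
  exact Integrable.fintype_prod fun _ => integrable_exp_mul_sq_gaussianReal ht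

theorem mgf_sum_sq_gaussian {t : ℝ} (ht : t < 1 / 2) :
    mgf (fun x : ι → ℝ => ∑ j, x j ^ 2) (Measure.pi fun _ => gaussianReal 0 1) t =
      (1 - 2 * t) ^ (-(Fintype.card ι / 2 : ℝ)) := by
  simp_rw [mgf, exp_mul_sum_sq_eq_prod]
  rw [integral_fintype_prod_eq_pow (fun y => exp (t * y ^ 2)),
    integral_exp_mul_sq_gaussianReal ht, ← rpow_mul_natCast (by linarith)]
  ring_nf

theorem sub_one_div_two_mul_lt_half {b : ℝ} (hb : 0 < b) : (b - 1) / (2 * b) < 1 / 2 := by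
  rw [div_lt_iff₀ (by positivity)]; linarith

-- `t = (b - 1) / (2 * b)` is the optimal Chernoff parameter for the level `card ι * b`.
theorem exp_mul_mgf_sum_sq_gaussian {b : ℝ} (hb : 0 < b) :
    exp (-((b - 1) / (2 * b)) * (Fintype.card ι * b)) *
        mgf (fun x : ι → ℝ => ∑ j, x j ^ 2) (Measure.pi fun _ => gaussianReal 0 1)
          ((b - 1) / (2 * b)) =
      exp (Fintype.card ι / 2 * (log b - (b - 1))) := by
  have h2t : 1 - 2 * ((b - 1) / (2 * b)) = b⁻¹ := by field_simp; ring
  rw [mgf_sum_sq_gaussian (sub_one_div_two_mul_lt_half hb), h2t, inv_rpow hb.le,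
    ← rpow_neg hb.le, neg_neg, rpow_def_of_pos hb, ← exp_add]
  congr 1
  field_simp
  ring

theorem measureReal_sum_sq_ge_le_exp {b : ℝ} (hb : 1 ≤ b) :
    (Measure.pi fun _ : ι => gaussianReal 0 1).real {x | Fintype.card ι * b ≤ ∑ j, x j ^ 2} ≤
      exp (Fintype.card ι / 2 * (log b - (b - 1))) := by
  have hb0 : 0 < b := by linarith
  rw [← exp_mul_mgf_sum_sq_gaussian hb0]
  exact measure_ge_le_exp_mul_mgf _ (by positivity)
    (integrable_exp_mul_sum_sq_gaussian (sub_one_div_two_mul_lt_half hb0))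

theorem measureReal_sum_sq_le_le_exp {b : ℝ} (hb0 : 0 < b) (hb : b ≤ 1) :
    (Measure.pi fun _ : ι => gaussianReal 0 1).real {x | ∑ j, x j ^ 2 ≤ Fintype.card ι * b} ≤
      exp (Fintype.card ι / 2 * (log b - (b - 1))) := by
  rw [← exp_mul_mgf_sum_sq_gaussian hb0]
  exact measure_le_le_exp_mul_mgf _ (div_nonpos_of_nonpos_of_nonneg (by linarith) (by positivity))
    (integrable_exp_mul_sum_sq_gaussian (sub_one_div_two_mul_lt_half hb0))

end ChiSquared

theorem log_one_add_two_mul_sub_le {ε : ℝ} (hε0 : 0 ≤ ε) (hε : ε ≤ 1 / 2) :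
    log (1 + 2 * ε) - 2 * ε ≤ -(ε ^ 2 / 2) := by
  have hx : 0 ≤ 2 * ε - ε ^ 2 / 2 := by nlinarith
  have hexp := quadratic_le_exp_of_nonneg hx
  have : log (1 + 2 * ε) ≤ 2 * ε - ε ^ 2 / 2 := by
    rw [log_le_iff_le_exp (by linarith)]
    nlinarith
  linarith

theorem log_sq_one_sub_sub_le {ε : ℝ} (hε : ε < 1) :
    log ((1 - ε) ^ 2) - ((1 - ε) ^ 2 - 1) ≤ -ε ^ 2 := by
  have := log_le_sub_one_of_pos (show 0 < 1 - ε by linarith)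
  rw [log_pow]
  push_cast
  nlinarith

section GaussianColumns

variable {κ ι : Type*} [Fintype κ] [Fintype ι]

theorem measureReal_sum_sq_notMem_Icc_le {ε : ℝ} (hε0 : 0 < ε) (hε : ε < 1 / 2) :
    (Measure.pi fun _ : κ => gaussianReal 0 1).real
        {x | ∑ j, x j ^ 2 ∉ Set.Icc (Fintype.card κ * (1 - ε) ^ 2) (Fintype.card κ * (1 + ε) ^ 2)} ≤
      2 * exp (-(Fintype.card κ * ε ^ 2 / 4)) := by
  set m : ℝ := (Fintype.card κ : ℝ)
  have hsub : {x : κ → ℝ | ∑ j, x j ^ 2 ∉ Set.Icc (m * (1 - ε) ^ 2) (m * (1 + ε) ^ 2)} ⊆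
      {x | ∑ j, x j ^ 2 ≤ m * (1 - ε) ^ 2} ∪ {x | m * (1 + 2 * ε) ≤ ∑ j, x j ^ 2} := by
    intro x hx
    simp only [Set.mem_Icc, not_and_or, not_le, Set.mem_ofPred_eq] at hx
    rcases hx with h | h
    · exact Or.inl h.le
    · exact Or.inr (le_trans (by gcongr; nlinarith) h.le)
  have hlower := measureReal_sum_sq_le_le_exp (ι := κ) (b := (1 - ε) ^ 2) (by nlinarith)
    (by nlinarith)
  have hupper := measureReal_sum_sq_ge_le_exp (ι := κ) (b := 1 + 2 * ε) (by linarith)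
  have hexp_lower : exp (m / 2 * (log ((1 - ε) ^ 2) - ((1 - ε) ^ 2 - 1))) ≤
      exp (-(m * ε ^ 2 / 4)) := by
    have := log_sq_one_sub_sub_le (by linarith : ε < 1)
    exact exp_le_exp.mpr (by nlinarith [show (0 : ℝ) ≤ m from Nat.cast_nonneg _, sq_nonneg ε])
  have hexp_upper : exp (m / 2 * (log (1 + 2 * ε) - (1 + 2 * ε - 1))) ≤
      exp (-(m * ε ^ 2 / 4)) := by
    have := log_one_add_two_mul_sub_le hε0.le hε.le
    exact exp_le_exp.mpr (by nlinarith [show (0 : ℝ) ≤ m from Nat.cast_nonneg _])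
  calc _ ≤ _ := measureReal_mono hsub
    _ ≤ _ := measureReal_union_le _ _
    _ ≤ _ := add_le_add (hlower.trans hexp_lower) (hupper.trans hexp_upper)
    _ = _ := by ring

theorem measurePreserving_eval_column (i : ι) :
    MeasurePreserving (fun (D : κ → ι → ℝ) j => D j i)
      (Measure.pi fun _ => Measure.pi fun _ => gaussianReal 0 1)
      (Measure.pi fun _ => gaussianReal 0 1) :=
  measurePreserving_pi _ _ fun _ => measurePreserving_eval _ i

theorem one_sub_le_measureReal_forall_sum_sq_mem_Icc {ε : ℝ} (hε0 : 0 < ε) (hε : ε < 1 / 2) :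
    1 - 2 * Fintype.card ι * exp (-(Fintype.card κ * ε ^ 2 / 4)) ≤
      (Measure.pi fun _ : κ => Measure.pi fun _ : ι => gaussianReal 0 1).real
        {D | ∀ i, ∑ j, D j i ^ 2 ∈
          Set.Icc (Fintype.card κ * (1 - ε) ^ 2) (Fintype.card κ * (1 + ε) ^ 2)} := by
  set I := Set.Icc ((Fintype.card κ : ℝ) * (1 - ε) ^ 2) (Fintype.card κ * (1 + ε) ^ 2)
  have hmeas : MeasurableSet {x : κ → ℝ | ∑ j, x j ^ 2 ∈ I} :=
    measurableSet_Icc.preimage (by fun_prop)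
  have hcompl : {D : κ → ι → ℝ | ∀ i, ∑ j, D j i ^ 2 ∈ I}ᶜ =
      ⋃ i, (fun D j => D j i) ⁻¹' {x | ∑ j, x j ^ 2 ∈ I}ᶜ := by
    ext D; simp
  have hbad : ∀ i, (Measure.pi fun _ : κ => Measure.pi fun _ : ι => gaussianReal 0 1).real
      ((fun D j => D j i) ⁻¹' {x | ∑ j, x j ^ 2 ∈ I}ᶜ) ≤
        2 * exp (-(Fintype.card κ * ε ^ 2 / 4)) := fun i => by
    rw [measureReal_def, (measurePreserving_eval_column i).measure_preimage
      hmeas.compl.nullMeasurableSet, ← measureReal_def]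
    exact measureReal_sum_sq_notMem_Icc_le hε0 hε
  have hgood : MeasurableSet {D : κ → ι → ℝ | ∀ i, ∑ j, D j i ^ 2 ∈ I} := by
    simp only [Set.ofPred_forall]
    exact MeasurableSet.iInter fun i => hmeas.preimage (measurePreserving_eval_column i).measurable
  have hunion := (measureReal_iUnion_fintype_le _).trans (Finset.sum_le_sum fun i _ => hbad i)
  rw [← hcompl, measureReal_compl hgood] at hunion
  simp only [Finset.sum_const, Finset.card_univ, nsmul_eq_mul, probReal_univ] at hunion
  linarith

end GaussianColumns

theorem EuclideanSpace.mul_norm_le_sqrt_sum_mul_sq {ι : Type*} [Fintype ι] {a : ℝ} {w : ι → ℝ}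
    (ha : 0 ≤ a) (hw : ∀ i, a ^ 2 ≤ w i) (z : EuclideanSpace ℝ ι) :
    a * ‖z‖ ≤ √(∑ i, w i * z i ^ 2) := by
  rw [EuclideanSpace.norm_eq, ← sqrt_sq ha, ← sqrt_mul (sq_nonneg a), Finset.mul_sum]
  refine sqrt_le_sqrt (Finset.sum_le_sum fun i _ => ?_)
  rw [norm_eq_abs, sq_abs]
  exact mul_le_mul_of_nonneg_right (hw i) (sq_nonneg _)

theorem EuclideanSpace.sqrt_sum_mul_sq_le_mul_norm {ι : Type*} [Fintype ι] {b : ℝ} {w : ι → ℝ}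
    (hb : 0 ≤ b) (hw : ∀ i, w i ≤ b ^ 2) (z : EuclideanSpace ℝ ι) :
    √(∑ i, w i * z i ^ 2) ≤ b * ‖z‖ := by
  rw [EuclideanSpace.norm_eq, ← sqrt_sq hb, ← sqrt_mul (sq_nonneg b), Finset.mul_sum]
  refine sqrt_le_sqrt (Finset.sum_le_sum fun i _ => ?_)
  rw [norm_eq_abs, sq_abs]
  exact mul_le_mul_of_nonneg_right (hw i) (sq_nonneg _)

section RandomizedHadamard

variable {ℓ m : ℕ}

theorem rht_sub (D : Fin m → Fin (2 ^ ℓ) → ℝ) (x y : EuclideanSpace ℝ (Fin (2 ^ ℓ)))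
    (j : Fin m) (k : Fin (2 ^ ℓ)) :
    rht ℓ m D x j k - rht ℓ m D y j k = rht ℓ m D (x - y) j k := by
  simp only [rht, ← Pi.sub_apply, ← mulVec_sub]
  congr 2
  ext i
  simp [mul_sub]

theorem sum_sq_rht (D : Fin m → Fin (2 ^ ℓ) → ℝ) (z : EuclideanSpace ℝ (Fin (2 ^ ℓ))) :
    ∑ j, ∑ k, rht ℓ m D z j k ^ 2 = 2 ^ ℓ * ∑ i, (∑ j, D j i ^ 2) * z i ^ 2 := by
  simp only [rht, sum_sq_Had_mulVec, ← Finset.mul_sum]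
  rw [Finset.sum_comm]
  simp only [mul_pow, Finset.sum_mul]

theorem sqrt_sum_sq_rht_div (hm : 0 < m) (D : Fin m → Fin (2 ^ ℓ) → ℝ)
    (z : EuclideanSpace ℝ (Fin (2 ^ ℓ))) :
    √(∑ j, ∑ k, rht ℓ m D z j k ^ 2) / √((m : ℝ) * 2 ^ ℓ) =
      √(∑ i, ((∑ j, D j i ^ 2) / m) * z i ^ 2) := by
  rw [← sqrt_div' _ (by positivity), sum_sq_rht, mul_comm (m : ℝ), ← div_div,
    mul_div_cancel_left₀ _ (by positivity), Finset.sum_div]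
  congr 2 with i
  ring

theorem rht_bilipschitz_of_forall_mem_Icc (hm : 0 < m) {a b : ℝ} (ha : 0 ≤ a) (hb : 0 ≤ b)
    {D : Fin m → Fin (2 ^ ℓ) → ℝ} (hD : ∀ i, ∑ j, D j i ^ 2 ∈ Set.Icc (m * a ^ 2) (m * b ^ 2))
    (x y : EuclideanSpace ℝ (Fin (2 ^ ℓ))) :
    a * ‖x - y‖ ≤
        √(∑ j, ∑ k, (rht ℓ m D x j k - rht ℓ m D y j k) ^ 2) / √((m : ℝ) * 2 ^ ℓ) ∧
      √(∑ j, ∑ k, (rht ℓ m D x j k - rht ℓ m D y j k) ^ 2) / √((m : ℝ) * 2 ^ ℓ) ≤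
        b * ‖x - y‖ := by
  have hm' : (0 : ℝ) < m := Nat.cast_pos.mpr hm
  simp_rw [rht_sub]
  rw [sqrt_sum_sq_rht_div hm]
  constructor
  · refine EuclideanSpace.mul_norm_le_sqrt_sum_mul_sq ha (fun i => ?_) _
    rw [le_div_iff₀ hm', mul_comm]
    exact (hD i).1
  · refine EuclideanSpace.sqrt_sum_mul_sq_le_mul_norm hb (fun i => ?_) _
    rw [div_le_iff₀ hm', mul_comm]
    exact (hD i).2

end RandomizedHadamard

theorem two_mul_mul_exp_neg_le {N δ c : ℝ} (hN : 0 < N) (hδ : 0 < δ)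
    (h : log N + log (2 / δ) ≤ c) : 2 * N * exp (-c) ≤ δ := by
  have hexp : exp (-c) ≤ δ / (2 * N) := by
    calc exp (-c) ≤ exp (-(log N + log (2 / δ))) := exp_le_exp.mpr (by linarith)
      _ = δ / (2 * N) := by
        rw [← log_mul hN.ne' (by positivity), exp_neg, exp_log (by positivity)]
        field_simp
  calc 2 * N * exp (-c) ≤ 2 * N * (δ / (2 * N)) := by gcongr
    _ = δ := by field_simp

instance (ℓ m : ℕ) : IsProbabilityMeasure (diagMeasure ℓ m) := by
  unfold diagMeasure
  infer_instance

/-- Lemma B.5: the randomized Hadamard transform is a uniform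
near-isometry. -/
theorem rht_near_isometry (ℓ : ℕ) (ε δ : ℝ) (hε : ε ∈ Set.Ioo (0 : ℝ) (1 / 2))
    (hδ : δ ∈ Set.Ioo (0 : ℝ) (1 / 2)) (m : ℕ)
    (hm : 4 * (Real.log (2 ^ ℓ) + Real.log (2 / δ)) / ε ^ 2 ≤ (m : ℝ)) :
    ENNReal.ofReal (1 - δ) ≤
      diagMeasure ℓ m
        {D | ∀ x y : EuclideanSpace ℝ (Fin (2 ^ ℓ)),
          (1 - ε) * ‖x - y‖ ≤
              Real.sqrt (∑ j, ∑ k, (rht ℓ m D x j k - rht ℓ m D y j k) ^ 2) /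
                Real.sqrt ((m : ℝ) * 2 ^ ℓ) ∧
            Real.sqrt (∑ j, ∑ k, (rht ℓ m D x j k - rht ℓ m D y j k) ^ 2) /
                Real.sqrt ((m : ℝ) * 2 ^ ℓ) ≤ (1 + ε) * ‖x - y‖} := by
  obtain ⟨hε0, hε2⟩ := hε
  obtain ⟨hδ0, hδ2⟩ := hδ
  have hlog : 0 < log (2 ^ ℓ) + log (2 / δ) :=
    add_pos_of_nonneg_of_pos (log_nonneg (one_le_pow₀ one_le_two))
      (log_pos (by rw [lt_div_iff₀ hδ0]; linarith))
  have hm0 : 0 < m :=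
    Nat.cast_pos.mp ((div_pos (mul_pos four_pos hlog) (by positivity)).trans_le hm)
  have hfail : 2 * 2 ^ ℓ * exp (-(m * ε ^ 2 / 4)) ≤ δ :=
    two_mul_mul_exp_neg_le (by positivity) hδ0 (by rw [div_le_iff₀ (by positivity)] at hm; linarith)
  have hgood := one_sub_le_measureReal_forall_sum_sq_mem_Icc (κ := Fin m) (ι := Fin (2 ^ ℓ)) hε0 hε2
  simp only [Fintype.card_fin, Nat.cast_pow, Nat.cast_ofNat] at hgood
  calc ENNReal.ofReal (1 - δ)
      ≤ ENNReal.ofReal ((diagMeasure ℓ m).real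
          {D | ∀ i, ∑ j, D j i ^ 2 ∈ Set.Icc (m * (1 - ε) ^ 2) (m * (1 + ε) ^ 2)}) :=
        ENNReal.ofReal_le_ofReal (by rw [diagMeasure]; linarith)
    _ ≤ _ := by
      rw [ofReal_measureReal]
      exact measure_mono fun D hD =>
        rht_bilipschitz_of_forall_mem_Icc hm0 (by linarith) (by linarith) hD
end
end

section
/- Let d = 2^ℓ, let ε ∈ (0, 1/2), let f : ℝ → ℝ be 1-Lipschitz, and let z ∈ ℝ^d with ‖z‖ ≤ 1. With S^r defined from z as in the context, the following hold for every t ∈ ℝ: (a) |E[F_{[d], t}(z) − F_{S^r, t}(z_{S^r})]| ≤ ν/4; and (b) if the realization of (D^1, …, D^m) satisfies ‖h̃(x) − h̃(y)‖ ≤ 2√(md)·‖x − y‖ for all x, y ∈ ℝ^d, then |F_{[d], t}(z) − F_{S^r, t}(z_{S^r})| ≤ ν/4. -/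
open MeasureTheory ProbabilityTheory Real
open scoped ENNReal NNReal Classical

noncomputable section

/-- `ρ = (ε/(10d))³`. -/
def rhoC (ℓ : ℕ) (ε : ℝ) : ℝ := (ε / (10 * 2 ^ ℓ)) ^ 3

/-- `λ = (10√(log(d/ε)))⁶`. -/
def lamC (ℓ : ℕ) (ε : ℝ) : ℝ := (10 * Real.sqrt (Real.log (2 ^ ℓ / ε))) ^ 6

/-- `γ = (10√(log(d/ε)))³`. -/
def gamC (ℓ : ℕ) (ε : ℝ) : ℝ := (10 * Real.sqrt (Real.log (2 ^ ℓ / ε))) ^ 3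

/-- `ν = ε/(256 log(d/ε))`. -/
def nuC (ℓ : ℕ) (ε : ℝ) : ℝ := ε / (256 * Real.log (2 ^ ℓ / ε))

/-- `r = 32 log(d/ε)`. -/
def rC (ℓ : ℕ) (ε : ℝ) : ℝ := 32 * Real.log (2 ^ ℓ / ε)

/-- `ζ = (ε/(10d))³`. -/
def zetaC (ℓ : ℕ) (ε : ℝ) : ℝ := (ε / (10 * 2 ^ ℓ)) ^ 3

/-- The grid `𝒯 = {± i·ζ : i = 0, …, ⌊λ/ζ⌋}`. -/
def TGrid (ℓ : ℕ) (ε : ℝ) : Set ℝ :=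
  {t | ∃ i : ℕ, (i : ℝ) ≤ lamC ℓ ε / zetaC ℓ ε ∧
    (t = (i : ℝ) * zetaC ℓ ε ∨ t = -((i : ℝ) * zetaC ℓ ε))}

/-- `z_S`: the vector `z` with the entries outside `S` set to `0`. -/
def restr (ℓ : ℕ) (S : Finset (Fin (2 ^ ℓ))) (z : EuclideanSpace ℝ (Fin (2 ^ ℓ))) :
    EuclideanSpace ℝ (Fin (2 ^ ℓ)) :=
  WithLp.toLp 2 (fun i => if i ∈ S then z i else 0)

/-- `F_{S,t}(z) = (1/(md)) ∑_{j,k} f(h̃_{j,k}(z_S) − t)`, as a function of the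
diagonal entries `D`. -/
def Frht (ℓ m : ℕ) (f : ℝ → ℝ) (S : Finset (Fin (2 ^ ℓ))) (t : ℝ)
    (z : EuclideanSpace ℝ (Fin (2 ^ ℓ))) (D : Fin m → Fin (2 ^ ℓ) → ℝ) : ℝ :=
  (1 / ((m : ℝ) * 2 ^ ℓ)) * ∑ j, ∑ k, f (rht ℓ m D (restr ℓ S z) j k - t)

/-- `F̃_{S,T,t}(z) = E[F_{S∪T,t}(z) | V_T]`: by independence of the Gaussian diagonal
entries, the conditional expectation given the entries indexed by `T` is obtained by
keeping the entries in `T` and integrating out fresh copies of all remaining entries. -/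
def Ftil (ℓ m : ℕ) (f : ℝ → ℝ) (S T : Finset (Fin (2 ^ ℓ))) (t : ℝ)
    (z : EuclideanSpace ℝ (Fin (2 ^ ℓ))) (D : Fin m → Fin (2 ^ ℓ) → ℝ) : ℝ :=
  ∫ D', Frht ℓ m f (S ∪ T) t z (fun j i => if i ∈ T then D j i else D' j i)
    ∂(diagMeasure ℓ m)

/-- The set `G_{S,T}` of unit-ball vectors supported on `S ∪ T` whose entries on `S`
are within a factor `2` of each other. -/
def GST (ℓ : ℕ) (S T : Finset (Fin (2 ^ ℓ))) : Set (EuclideanSpace ℝ (Fin (2 ^ ℓ))) :=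
  {z | ‖z‖ ≤ 1 ∧ (∀ i, i ∉ S ∪ T → z i = 0) ∧
    ∀ i ∈ S, ∀ j ∈ S, (1 / 2) * |z j| ≤ |z i| ∧ |z i| ≤ 2 * |z j|}

/-- `Gnet` is an admissible family of `ρ`-nets: for all disjoint `S, T` with
`|T| ≤ r·|S|`, `Gnet S T` is a `ρ`-net of `G_{S,T}` of size at most `(10/ρ)^{(r+1)|S|}`. -/
def IsNetFamily (ℓ : ℕ) (ε : ℝ)
    (Gnet : Finset (Fin (2 ^ ℓ)) → Finset (Fin (2 ^ ℓ)) →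
      Finset (EuclideanSpace ℝ (Fin (2 ^ ℓ)))) : Prop :=
  ∀ S T : Finset (Fin (2 ^ ℓ)), Disjoint S T → (T.card : ℝ) ≤ rC ℓ ε * S.card →
    ↑(Gnet S T) ⊆ GST ℓ S T ∧
    (∀ w ∈ GST ℓ S T, ∃ w' ∈ Gnet S T, ‖w - w'‖ ≤ rhoC ℓ ε) ∧
    ((Gnet S T).card : ℝ) ≤ (10 / rhoC ℓ ε) ^ ((rC ℓ ε + 1) * (S.card : ℝ))

/-! Auxiliary lemmas -/

lemma my_map_eval_pi {ι : Type*} [Fintype ι] {α : ι → Type*} [∀ i, MeasurableSpace (α i)]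
    (μ : ∀ i, Measure (α i)) [∀ i, IsProbabilityMeasure (μ i)] (i : ι) :
    (Measure.pi μ).map (Function.eval i) = μ i := by
  ext s hs
  rw [Measure.map_apply (measurable_pi_apply i) hs, Set.eval_preimage, Measure.pi_pi]
  rw [Finset.prod_eq_single i]
  · simp
  · intro j _ hj; simp [Function.update_of_ne hj]
  · simp

lemma my_abs_le_exp_quarter_sq (x : ℝ) : |x| ≤ Real.exp (x^2/4) := by
  have h1 : |x| ≤ x^2/4 + 1 := by nlinarith [sq_abs x, sq_nonneg (|x| - 2)]
  have h2 := Real.add_one_le_exp (x^2/4)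
  linarith

lemma my_gauss_abs_int : Integrable (fun x : ℝ => |x|) (gaussianReal 0 1) ∧
    ∫ x, |x| ∂(gaussianReal 0 1) ≤ 4 := by
  set f : ℝ → ℝ≥0 := fun x => (gaussianPDFReal 0 1 x).toNNReal with hf
  have hf_meas : Measurable f := (measurable_gaussianPDFReal 0 1).real_toNNReal
  have hg : gaussianReal 0 1 =
      MeasureTheory.volume.withDensity (fun x => (f x : ℝ≥0∞)) := by
    rw [gaussianReal_of_var_ne_zero 0 one_ne_zero]; rfl
  have hcoe : ∀ x, (f x : ℝ) = gaussianPDFReal 0 1 x := fun x =>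
    Real.coe_toNNReal _ (gaussianPDFReal_nonneg 0 1 x)
  have hpdf_le : ∀ x : ℝ, gaussianPDFReal 0 1 x ≤ Real.exp (-x^2/2) := by
    intro x
    rw [gaussianPDFReal_def]
    have h2 : (1:ℝ) ≤ Real.sqrt (2 * π * (1:ℝ≥0)) := by
      rw [Real.one_le_sqrt]
      · push_cast; nlinarith [Real.pi_gt_three]
    have : (Real.sqrt (2 * π * (1:ℝ≥0)))⁻¹ ≤ 1 := inv_le_one_of_one_le₀ h2
    calc (Real.sqrt (2 * π * (1:ℝ≥0)))⁻¹ * Real.exp (-(x - 0)^2/(2*(1:ℝ≥0)))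
        ≤ 1 * Real.exp (-(x - 0)^2/(2*(1:ℝ≥0))) := by
          exact mul_le_mul_of_nonneg_right this (Real.exp_nonneg _)
      _ = Real.exp (-x^2/2) := by push_cast; ring_nf
  have hpt : ∀ x : ℝ, (f x : ℝ) * |x| ≤ Real.exp (-(4⁻¹ : ℝ) * x^2) := by
    intro x
    calc (f x : ℝ) * |x| ≤ Real.exp (-x^2/2) * Real.exp (x^2/4) := by
          rw [hcoe]
          exact mul_le_mul (hpdf_le x) (my_abs_le_exp_quarter_sq x) (abs_nonneg x)
            (Real.exp_nonneg _)
      _ = Real.exp (-(4⁻¹ : ℝ) * x^2) := by rw [← Real.exp_add]; ring_nf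
  have hdom : Integrable (fun x : ℝ => Real.exp (-(4⁻¹ : ℝ) * x^2)) volume :=
    integrable_exp_neg_mul_sq (by norm_num)
  have hmeas2 : AEStronglyMeasurable (fun x : ℝ => (f x : ℝ) * |x|) volume :=
    ((measurable_coe_nnreal_real.comp hf_meas).mul measurable_abs).aestronglyMeasurable
  have hint : Integrable (fun x : ℝ => (f x : ℝ) * |x|) volume := by
    refine hdom.mono hmeas2 (Filter.Eventually.of_forall fun x => ?_)
    rw [Real.norm_eq_abs, Real.norm_eq_abs, abs_of_nonneg (by positivity),
      abs_of_nonneg (Real.exp_nonneg _)]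
    exact hpt x
  constructor
  · rw [hg]
    rw [integrable_withDensity_iff_integrable_smul hf_meas]
    simpa [NNReal.smul_def] using hint
  · rw [hg, integral_withDensity_eq_integral_smul hf_meas]
    simp_rw [NNReal.smul_def, smul_eq_mul]
    calc ∫ x, (f x : ℝ) * |x| ≤ ∫ x, Real.exp (-(4⁻¹ : ℝ) * x^2) := by
          refine integral_mono_of_nonneg (Filter.Eventually.of_forall fun x => by positivity)
            hdom (Filter.Eventually.of_forall hpt)
      _ = Real.sqrt (π / 4⁻¹) := integral_gaussian _
      _ ≤ 4 := by
          have h1 : Real.sqrt (π / 4⁻¹) ≤ Real.sqrt 16 :=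
            Real.sqrt_le_sqrt (by nlinarith [Real.pi_le_four,
              show π / 4⁻¹ = 4 * π from by field_simp])
          have h2 : Real.sqrt 16 = 4 := by
            rw [show (16:ℝ) = 4^2 by norm_num]; exact Real.sqrt_sq (by norm_num)
          linarith

lemma my_diag_eval (ℓ m : ℕ) (j : Fin m) (i : Fin (2^ℓ)) :
    Integrable (fun D : Fin m → Fin (2^ℓ) → ℝ => |D j i|) (diagMeasure ℓ m) ∧
    ∫ D, |D j i| ∂(diagMeasure ℓ m) = ∫ x, |x| ∂(gaussianReal 0 1) := by
  have hfm : Measurable (fun D : Fin m → Fin (2^ℓ) → ℝ => D j i) :=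
    (measurable_pi_apply i).comp (measurable_pi_apply j)
  have hmap : (diagMeasure ℓ m).map (fun D => D j i) = gaussianReal 0 1 := by
    have h1 : (diagMeasure ℓ m).map (Function.eval j) =
        Measure.pi (fun _ : Fin (2^ℓ) => gaussianReal 0 1) := my_map_eval_pi _ j
    have h2 : (Measure.pi fun _ : Fin (2^ℓ) => gaussianReal 0 1).map (Function.eval i) =
        gaussianReal 0 1 := my_map_eval_pi _ i
    calc (diagMeasure ℓ m).map (fun D => D j i)
        = ((diagMeasure ℓ m).map (Function.eval j)).map (Function.eval i) := by
          rw [Measure.map_map (measurable_pi_apply i) (measurable_pi_apply j)]; rfl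
      _ = gaussianReal 0 1 := by rw [h1, h2]
  have hgm : AEStronglyMeasurable (fun x : ℝ => |x|)
      ((diagMeasure ℓ m).map (fun D => D j i)) := by
    rw [hmap]; exact measurable_abs.aestronglyMeasurable
  constructor
  · have h := my_gauss_abs_int.1
    rw [← hmap] at h
    exact (integrable_map_measure hgm hfm.aemeasurable).1 h
  · rw [← hmap, integral_map hfm.aemeasurable hgm]

lemma my_fromBlocks_abs {α : Type*} (A : Matrix α α ℝ) (h : ∀ a b, |A a b| = 1) :
    ∀ (x y : α ⊕ α), |Matrix.fromBlocks A A A (-A) x y| = 1 := by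
  rintro (a|a) (b|b) <;>
    simp only [Matrix.fromBlocks_apply₁₁, Matrix.fromBlocks_apply₁₂, Matrix.fromBlocks_apply₂₁,
      Matrix.fromBlocks_apply₂₂, Matrix.neg_apply, abs_neg] <;> exact h _ _

lemma my_Had_abs : ∀ (ℓ : ℕ) (k i : Fin (2^ℓ)), |Had ℓ k i| = 1 := by
  intro ℓ
  induction ℓ with
  | zero =>
    intro k i
    have hki : k = i := Fin.ext (by omega)
    rw [show Had 0 = 1 from rfl, Matrix.one_apply, if_pos hki]
    norm_num
  | succ n ih =>
    intro k i
    rw [show Had (n+1) = Matrix.reindex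
        (finSumFinEquiv.trans (finCongr (by rw [pow_succ, mul_two])))
        (finSumFinEquiv.trans (finCongr (by rw [pow_succ, mul_two])))
        (Matrix.fromBlocks (Had n) (Had n) (Had n) (-(Had n))) from rfl]
    simp only [Matrix.reindex_apply, Matrix.submatrix_apply]
    exact my_fromBlocks_abs (Had n) ih _ _

lemma my_sum_abs_le_sqrt {α : Type*} (s : Finset α) (g : α → ℝ) :
    ∑ x ∈ s, |g x| ≤ Real.sqrt s.card * Real.sqrt (∑ x ∈ s, g x ^ 2) := by
  have h := Finset.sum_mul_sq_le_sq_mul_sq s (fun _ => 1) (fun x => |g x|)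
  simp only [one_pow, one_mul, Finset.sum_const, nsmul_eq_mul, mul_one, sq_abs] at h
  have h2 : ∑ x ∈ s, |g x| = Real.sqrt ((∑ x ∈ s, |g x|)^2) :=
    (Real.sqrt_sq (Finset.sum_nonneg fun x _ => abs_nonneg _)).symm
  rw [h2, ← Real.sqrt_mul (Nat.cast_nonneg s.card)]
  exact Real.sqrt_le_sqrt h

lemma my_key_numeric (d ε : ℝ) (rN : ℕ) (hd1 : 1 ≤ d) (hε0 : 0 < ε) (hε2 : ε < 1/2)
    (hrN : 32 * Real.log (d/ε) ≤ (rN:ℝ)) :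
    d * (1/2)^rN ≤ (ε / (256 * Real.log (d/ε))) / 16 := by
  set a : ℝ := d / ε with ha
  have ha2 : 2 ≤ a := by
    rw [ha, le_div_iff₀ hε0]; nlinarith
  have ha0 : 0 < a := by linarith
  have hL : 0 < Real.log a := Real.log_pos (by linarith)
  have hlog2 : (0.6931:ℝ) < Real.log 2 := by
    have := Real.log_two_gt_d9; linarith
  have hexp : a^(22:ℕ) ≤ (2:ℝ)^rN := by
    have h1 : (2:ℝ)^rN = Real.exp (rN * Real.log 2) := by
      rw [← Real.log_pow, Real.exp_log (by positivity)]
    have h2 : a^(22:ℕ) = Real.exp (((22:ℕ):ℝ) * Real.log a) := by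
      rw [← Real.log_pow, Real.exp_log (by positivity)]
    rw [h1, h2]
    apply Real.exp_le_exp.2
    push_cast
    have hm1 : 32 * Real.log a * Real.log 2 ≤ (rN:ℝ) * Real.log 2 :=
      mul_le_mul_of_nonneg_right hrN (by linarith)
    nlinarith [hL.le]
  have hLa : Real.log a ≤ a := by
    have := Real.log_le_sub_one_of_pos ha0; linarith
  have hd : d = ε * a := by rw [ha]; field_simp
  have h20 : (2:ℝ)^(20:ℕ) ≤ a^(20:ℕ) := pow_le_pow_left₀ (by norm_num) ha2 20
  have hgoal : d * 4096 * Real.log a ≤ ε * a^(22:ℕ) := by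
    calc d * 4096 * Real.log a = ε * (4096 * (a * Real.log a)) := by rw [hd]; ring
      _ ≤ ε * (4096 * (a * a)) := by gcongr
      _ ≤ ε * (a^(20:ℕ) * (a * a)) := by
          gcongr
          calc (4096:ℝ) ≤ 2^(20:ℕ) := by norm_num
            _ ≤ a^(20:ℕ) := h20
      _ = ε * a^(22:ℕ) := by ring
  have hstep : d * (256 * Real.log a * 16) ≤ ε * 2^rN := by
    calc d * (256 * Real.log a * 16) = d * 4096 * Real.log a := by ring
      _ ≤ ε * a^(22:ℕ) := hgoal
      _ ≤ ε * 2^rN := mul_le_mul_of_nonneg_left hexp hε0.le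
  rw [div_div, show (1/2:ℝ)^rN = 1/2^rN from by rw [div_pow, one_pow], mul_one_div,
    div_le_div_iff₀ (by positivity) (by positivity)]
  linarith [hstep]



/-- Claim 3.3: `z` is well approximated by `z_{S^r}` both in
expectation and pointwise (on realizations satisfying the spectral bound), where
`S^r` is the union of the dyadic level sets of the coordinates of `z`. -/
theorem z_approx_by_zSr
    (ℓ m : ℕ) (ε : ℝ) (hε : ε ∈ Set.Ioo (0 : ℝ) (1 / 2))
    (f : ℝ → ℝ) (hf : LipschitzWith 1 f)
    (z : EuclideanSpace ℝ (Fin (2 ^ ℓ))) (hz : ‖z‖ ≤ 1)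
    (τ : ℝ) (hτ : τ = ⨆ k : Fin (2 ^ ℓ), |z k|)
    (Sl : ℕ → Finset (Fin (2 ^ ℓ)))
    (hSl : ∀ l : ℕ, Sl l =
      Finset.univ.filter fun k => τ / 2 ^ l < |z k| ∧ |z k| ≤ τ / 2 ^ (l - 1))
    (rN : ℕ) (hrN : rN = ⌈rC ℓ ε⌉₊)
    (Sr : Finset (Fin (2 ^ ℓ)))
    (hSr : Sr = (Finset.range rN).biUnion fun l => Sl (l + 1)) :
    (∀ t : ℝ,
      |∫ D, (Frht ℓ m f Finset.univ t z D - Frht ℓ m f Sr t z D) ∂(diagMeasure ℓ m)| ≤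
        nuC ℓ ε / 4) ∧
    (∀ D : Fin m → Fin (2 ^ ℓ) → ℝ,
      (∀ x y : EuclideanSpace ℝ (Fin (2 ^ ℓ)),
        Real.sqrt (∑ j, ∑ k, (rht ℓ m D x j k - rht ℓ m D y j k) ^ 2) ≤
          2 * Real.sqrt ((m : ℝ) * 2 ^ ℓ) * ‖x - y‖) →
      ∀ t : ℝ, |Frht ℓ m f Finset.univ t z D - Frht ℓ m f Sr t z D| ≤ nuC ℓ ε / 4) := by
  obtain ⟨hε0, hε2⟩ := hε
  -- basic facts
  have hd1 : (1:ℝ) ≤ 2^ℓ := one_le_pow₀ one_le_two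
  have hdpos : (0:ℕ) < 2^ℓ := pow_pos (by norm_num) ℓ
  have ha2 : (2:ℝ) ≤ (2^ℓ : ℝ) / ε := by
    rw [le_div_iff₀ hε0]; nlinarith
  have hL : 0 < Real.log ((2^ℓ:ℝ)/ε) := Real.log_pos (by linarith)
  have hν : 0 < nuC ℓ ε := by rw [nuC]; positivity
  have hrNge : rC ℓ ε ≤ (rN:ℝ) := by rw [hrN]; exact Nat.le_ceil _
  have hkey : (2^ℓ:ℝ) * (1/2)^rN ≤ nuC ℓ ε / 16 := by
    rw [nuC]
    exact my_key_numeric (2^ℓ:ℝ) ε rN hd1 hε0 hε2 (by rw [rC] at hrNge; exact hrNge)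
  have hrNpos : 0 < rN := by
    rw [hrN]
    apply Nat.ceil_pos.2
    rw [rC]; positivity
  -- τ bounds
  have hτub : ∀ k : Fin (2^ℓ), |z k| ≤ τ := by
    intro k
    rw [hτ]
    exact le_ciSup (f := fun k : Fin (2^ℓ) => |z k|) (Set.Finite.bddAbove (Set.finite_range _)) k
  have hτ0 : 0 ≤ τ := le_trans (abs_nonneg _) (hτub ⟨0, hdpos⟩)
  have hτ1 : τ ≤ 1 := by
    rw [hτ]
    have hne : Nonempty (Fin (2^ℓ)) := ⟨⟨0, hdpos⟩⟩
    refine ciSup_le fun k => ?_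
    refine le_trans ?_ hz
    rw [EuclideanSpace.norm_eq, ← Real.sqrt_sq_eq_abs]
    apply Real.sqrt_le_sqrt
    calc z k ^ 2 = ‖z k‖ ^ 2 := by rw [Real.norm_eq_abs, sq_abs]
      _ ≤ ∑ i, ‖z i‖ ^ 2 :=
        Finset.single_le_sum (f := fun i => ‖z i‖ ^ 2) (fun i _ => by positivity)
          (Finset.mem_univ k)
  -- covering: entries outside Sr are small
  have hcov : ∀ i : Fin (2^ℓ), i ∉ Sr → |z i| ≤ τ / 2^rN := by
    intro i hi
    by_contra hlt
    push_neg at hlt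
    have hex : ∃ n : ℕ, τ / 2^n < |z i| := ⟨rN, hlt⟩
    have hl_spec : τ / 2^(Nat.find hex) < |z i| := Nat.find_spec hex
    have hl_le : Nat.find hex ≤ rN := Nat.find_le hlt
    have hl_pos : 0 < Nat.find hex := by
      rcases Nat.eq_zero_or_pos (Nat.find hex) with h0 | h
      · exfalso
        have h1 := hl_spec
        rw [h0, pow_zero, div_one] at h1
        exact absurd (hτub i) (not_le.2 h1)
      · exact h
    have hl_min : ¬ (τ / 2^(Nat.find hex - 1) < |z i|) :=
      Nat.find_min hex (Nat.sub_lt hl_pos one_pos)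
    push_neg at hl_min
    apply hi
    rw [hSr]
    apply Finset.mem_biUnion.2
    refine ⟨Nat.find hex - 1, Finset.mem_range.2 (by omega), ?_⟩
    rw [Nat.sub_add_cancel hl_pos, hSl]
    simp only [Finset.mem_filter, Finset.mem_univ, true_and]
    exact ⟨hl_spec, hl_min⟩
  -- coordinatewise bound on z - z_{Sr}
  have hwb : ∀ i : Fin (2^ℓ), |z i - restr ℓ Sr z i| ≤ (1/2:ℝ)^rN := by
    intro i
    by_cases h : i ∈ Sr
    · simp only [restr, if_pos h, sub_self, abs_zero]
      positivity
    · simp only [restr, if_neg h, sub_zero]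
      calc |z i| ≤ τ / 2^rN := hcov i h
        _ ≤ 1 / 2^rN := by gcongr
        _ = (1/2:ℝ)^rN := by rw [div_pow, one_pow]
  -- Lipschitz bound
  have hlip : ∀ a b t : ℝ, |f (a - t) - f (b - t)| ≤ |a - b| := by
    intro a b t
    have h := hf.dist_le_mul (a - t) (b - t)
    rw [Real.dist_eq, Real.dist_eq] at h
    simpa [sub_sub_sub_cancel_right] using h
  -- rewriting the rht difference
  have hrw : ∀ (D : Fin m → Fin (2^ℓ) → ℝ) (j : Fin m) (k : Fin (2^ℓ)),
      rht ℓ m D (restr ℓ Finset.univ z) j k - rht ℓ m D (restr ℓ Sr z) j k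
        = ∑ i, Had ℓ k i * (D j i * (z i - restr ℓ Sr z i)) := by
    intro D j k
    simp only [rht, Matrix.mulVec, dotProduct]
    rw [← Finset.sum_sub_distrib]
    refine Finset.sum_congr rfl fun i _ => ?_
    simp only [restr, Finset.mem_univ, if_true]
    by_cases h : i ∈ Sr <;> simp [restr, h] <;> ring
  -- coefficient facts
  set c : ℝ := 1 / ((m:ℝ) * 2^ℓ) with hc
  have hc0 : 0 ≤ c := by positivity
  have hcoef : ((m:ℝ) * 2^ℓ) * c ≤ 1 := by
    rcases eq_or_ne ((m:ℝ) * 2^ℓ) 0 with h | h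
    · rw [h]; norm_num
    · rw [hc, mul_one_div, div_self h]
  -- pointwise bound on the difference of F's
  have hFd : ∀ (D : Fin m → Fin (2^ℓ) → ℝ) (t : ℝ),
      |Frht ℓ m f Finset.univ t z D - Frht ℓ m f Sr t z D| ≤
        c * ∑ j, ∑ k, |rht ℓ m D (restr ℓ Finset.univ z) j k
          - rht ℓ m D (restr ℓ Sr z) j k| := by
    intro D t
    rw [Frht, Frht, ← mul_sub, ← hc, abs_mul, abs_of_nonneg hc0]
    refine mul_le_mul_of_nonneg_left ?_ hc0
    rw [← Finset.sum_sub_distrib]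
    refine (Finset.abs_sum_le_sum_abs _ _).trans (Finset.sum_le_sum fun j _ => ?_)
    rw [← Finset.sum_sub_distrib]
    refine (Finset.abs_sum_le_sum_abs _ _).trans (Finset.sum_le_sum fun k _ => ?_)
    exact hlip _ _ t
  -- norm bound on restr univ z - restr Sr z
  have hxy : ∀ i : Fin (2^ℓ),
      (restr ℓ Finset.univ z - restr ℓ Sr z) i = z i - restr ℓ Sr z i := by
    intro i
    have : (restr ℓ Finset.univ z - restr ℓ Sr z) i
        = restr ℓ Finset.univ z i - restr ℓ Sr z i := rfl
    rw [this]
    simp [restr]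
  have hnorm : ‖restr ℓ Finset.univ z - restr ℓ Sr z‖ ≤ (2^ℓ:ℝ) * (1/2)^rN := by
    rw [EuclideanSpace.norm_eq]
    have hsum : ∑ i, ‖(restr ℓ Finset.univ z - restr ℓ Sr z) i‖^2
        ≤ (2^ℓ:ℝ) * ((1/2:ℝ)^rN)^2 := by
      calc ∑ i, ‖(restr ℓ Finset.univ z - restr ℓ Sr z) i‖^2
          ≤ ∑ _i : Fin (2^ℓ), ((1/2:ℝ)^rN)^2 := by
            refine Finset.sum_le_sum fun i _ => ?_
            rw [hxy i, Real.norm_eq_abs]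
            have h0 : (0:ℝ) ≤ |z i - restr ℓ Sr z i| := abs_nonneg _
            nlinarith [hwb i]
        _ = (2^ℓ:ℝ) * ((1/2:ℝ)^rN)^2 := by
            rw [Finset.sum_const, Finset.card_univ, Fintype.card_fin, nsmul_eq_mul]
            push_cast; ring
    calc Real.sqrt (∑ i, ‖(restr ℓ Finset.univ z - restr ℓ Sr z) i‖^2)
        ≤ Real.sqrt ((2^ℓ:ℝ) * ((1/2:ℝ)^rN)^2) := Real.sqrt_le_sqrt hsum
      _ = Real.sqrt ((2^ℓ:ℝ)) * (1/2:ℝ)^rN := by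
          rw [Real.sqrt_mul (by positivity), Real.sqrt_sq (by positivity)]
      _ ≤ (2^ℓ:ℝ) * (1/2:ℝ)^rN := by
          refine mul_le_mul_of_nonneg_right ?_ (by positivity)
          calc Real.sqrt ((2^ℓ:ℝ)) ≤ Real.sqrt (((2^ℓ:ℝ))^2) := by
                apply Real.sqrt_le_sqrt; nlinarith
            _ = (2^ℓ:ℝ) := Real.sqrt_sq (by positivity)
  constructor
  · -- part (a)
    intro t
    set M : ℝ := ∫ x, |x| ∂(gaussianReal 0 1) with hM
    have hM4 : M ≤ 4 := my_gauss_abs_int.2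
    have hM0 : 0 ≤ M := integral_nonneg fun x => abs_nonneg x
    -- dominating function
    set H : (Fin m → Fin (2^ℓ) → ℝ) → ℝ :=
      fun D => c * ∑ j : Fin m, ∑ k : Fin (2^ℓ), ∑ i : Fin (2^ℓ),
        |z i - restr ℓ Sr z i| * |D j i| with hH
    have hterm_int : ∀ (j : Fin m) (k : Fin (2^ℓ)),
        Integrable (fun D : Fin m → Fin (2^ℓ) → ℝ =>
          ∑ i : Fin (2^ℓ), |z i - restr ℓ Sr z i| * |D j i|) (diagMeasure ℓ m) := by
      intro j k
      exact integrable_finset_sum _ fun i _ => ((my_diag_eval ℓ m j i).1.const_mul _)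
    have hsum_int : ∀ j : Fin m,
        Integrable (fun D : Fin m → Fin (2^ℓ) → ℝ =>
          ∑ k : Fin (2^ℓ), ∑ i : Fin (2^ℓ), |z i - restr ℓ Sr z i| * |D j i|)
          (diagMeasure ℓ m) :=
      fun j => integrable_finset_sum _ fun k _ => hterm_int j k
    have hH_int : Integrable H (diagMeasure ℓ m) :=
      (integrable_finset_sum _ fun j _ => hsum_int j).const_mul c
    have hptH : ∀ D : Fin m → Fin (2^ℓ) → ℝ,
        |Frht ℓ m f Finset.univ t z D - Frht ℓ m f Sr t z D| ≤ H D := by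
      intro D
      refine (hFd D t).trans ?_
      rw [hH]
      refine mul_le_mul_of_nonneg_left ?_ hc0
      refine Finset.sum_le_sum fun j _ => Finset.sum_le_sum fun k _ => ?_
      rw [hrw D j k]
      refine (Finset.abs_sum_le_sum_abs _ _).trans (Finset.sum_le_sum fun i _ => ?_)
      rw [abs_mul, abs_mul, my_Had_abs ℓ k i, one_mul, mul_comm]
    have hHint_val : ∫ D, H D ∂(diagMeasure ℓ m)
        = c * ∑ j : Fin m, ∑ k : Fin (2^ℓ), ∑ i, |z i - restr ℓ Sr z i| * M := by
      rw [hH, integral_const_mul]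
      congr 1
      rw [integral_finset_sum _ fun j _ => hsum_int j]
      refine Finset.sum_congr rfl fun j _ => ?_
      rw [integral_finset_sum _ fun k _ => hterm_int j k]
      refine Finset.sum_congr rfl fun k _ => ?_
      rw [integral_finset_sum _ fun i _ => ((my_diag_eval ℓ m j i).1.const_mul _)]
      refine Finset.sum_congr rfl fun i _ => ?_
      rw [integral_const_mul, (my_diag_eval ℓ m j i).2]
    have hHbound : ∫ D, H D ∂(diagMeasure ℓ m) ≤ nuC ℓ ε / 4 := by
      rw [hHint_val]
      have hinner : ∑ i, |z i - restr ℓ Sr z i| * M ≤ (2^ℓ:ℝ) * ((1/2:ℝ)^rN * 4) := by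
        calc ∑ i, |z i - restr ℓ Sr z i| * M
            ≤ ∑ _i : Fin (2^ℓ), (1/2:ℝ)^rN * 4 := by
              refine Finset.sum_le_sum fun i _ => ?_
              exact mul_le_mul (hwb i) hM4 hM0 (by positivity)
          _ = (2^ℓ:ℝ) * ((1/2:ℝ)^rN * 4) := by
              rw [Finset.sum_const, Finset.card_univ, Fintype.card_fin, nsmul_eq_mul]
              push_cast; ring
      have h2 : ∑ j : Fin m, ∑ k : Fin (2^ℓ), ∑ i, |z i - restr ℓ Sr z i| * M
          ≤ ((m:ℝ) * 2^ℓ) * ((2^ℓ:ℝ) * ((1/2:ℝ)^rN * 4)) := by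
        calc ∑ j : Fin m, ∑ k : Fin (2^ℓ), ∑ i, |z i - restr ℓ Sr z i| * M
            ≤ ∑ _j : Fin m, ∑ _k : Fin (2^ℓ), (2^ℓ:ℝ) * ((1/2:ℝ)^rN * 4) := by
              exact Finset.sum_le_sum fun j _ => Finset.sum_le_sum fun k _ => hinner
          _ = ((m:ℝ) * 2^ℓ) * ((2^ℓ:ℝ) * ((1/2:ℝ)^rN * 4)) := by
              simp only [Finset.sum_const, Finset.card_univ, Fintype.card_fin, nsmul_eq_mul]
              push_cast; ring
      have h3 : c * (∑ j : Fin m, ∑ k : Fin (2^ℓ), ∑ i, |z i - restr ℓ Sr z i| * M)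
          ≤ c * (((m:ℝ) * 2^ℓ) * ((2^ℓ:ℝ) * ((1/2:ℝ)^rN * 4))) :=
        mul_le_mul_of_nonneg_left h2 hc0
      refine h3.trans ?_
      have h4 : c * (((m:ℝ) * 2^ℓ) * ((2^ℓ:ℝ) * ((1/2:ℝ)^rN * 4)))
          = (((m:ℝ) * 2^ℓ) * c) * (4 * ((2^ℓ:ℝ) * (1/2:ℝ)^rN)) := by ring
      rw [h4]
      calc (((m:ℝ) * 2^ℓ) * c) * (4 * ((2^ℓ:ℝ) * (1/2:ℝ)^rN))
          ≤ 1 * (4 * ((2^ℓ:ℝ) * (1/2:ℝ)^rN)) := by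
            refine mul_le_mul_of_nonneg_right hcoef (by positivity)
        _ = 4 * ((2^ℓ:ℝ) * (1/2:ℝ)^rN) := by ring
        _ ≤ 4 * (nuC ℓ ε / 16) := by
            refine mul_le_mul_of_nonneg_left hkey (by norm_num)
        _ = nuC ℓ ε / 4 := by ring
    calc |∫ D, (Frht ℓ m f Finset.univ t z D - Frht ℓ m f Sr t z D) ∂(diagMeasure ℓ m)|
        ≤ ∫ D, |Frht ℓ m f Finset.univ t z D - Frht ℓ m f Sr t z D| ∂(diagMeasure ℓ m) := by
          have h := norm_integral_le_integral_norm (μ := diagMeasure ℓ m)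
            (fun D => Frht ℓ m f Finset.univ t z D - Frht ℓ m f Sr t z D)
          simpa [Real.norm_eq_abs] using h
      _ ≤ ∫ D, H D ∂(diagMeasure ℓ m) := by
          refine integral_mono_of_nonneg
            (Filter.Eventually.of_forall fun D => abs_nonneg _) hH_int
            (Filter.Eventually.of_forall fun D => hptH D)
      _ ≤ nuC ℓ ε / 4 := hHbound
  · -- part (b)
    intro D hD t
    refine (hFd D t).trans ?_
    set x := restr ℓ Finset.univ z with hx
    set y := restr ℓ Sr z with hy
    set P : ℝ := (m:ℝ) * 2^ℓ with hP
    have hP0 : (0:ℝ) ≤ P := by positivity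
    have hCS : ∑ j, ∑ k, |rht ℓ m D x j k - rht ℓ m D y j k| ≤
        Real.sqrt P * Real.sqrt (∑ j, ∑ k, (rht ℓ m D x j k - rht ℓ m D y j k)^2) := by
      have h := my_sum_abs_le_sqrt (Finset.univ : Finset (Fin m × Fin (2^ℓ)))
        (fun p => rht ℓ m D x p.1 p.2 - rht ℓ m D y p.1 p.2)
      rw [show ((Finset.univ : Finset (Fin m × Fin (2^ℓ))).card : ℝ) = P by
        rw [Finset.card_univ, Fintype.card_prod, Fintype.card_fin, Fintype.card_fin, hP]
        push_cast; ring] at h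
      calc ∑ j, ∑ k, |rht ℓ m D x j k - rht ℓ m D y j k|
          = ∑ p : Fin m × Fin (2^ℓ), |rht ℓ m D x p.1 p.2 - rht ℓ m D y p.1 p.2| := by
            rw [Fintype.sum_prod_type]
        _ ≤ Real.sqrt P *
            Real.sqrt (∑ p : Fin m × Fin (2^ℓ), (rht ℓ m D x p.1 p.2 - rht ℓ m D y p.1 p.2)^2) :=
            h
        _ = Real.sqrt P * Real.sqrt (∑ j, ∑ k, (rht ℓ m D x j k - rht ℓ m D y j k)^2) := by
            rw [Fintype.sum_prod_type]
    have hDle := hD x y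
    have hchain : ∑ j, ∑ k, |rht ℓ m D x j k - rht ℓ m D y j k| ≤
        Real.sqrt P * (2 * Real.sqrt P * ‖x - y‖) := by
      refine hCS.trans ?_
      exact mul_le_mul_of_nonneg_left hDle (Real.sqrt_nonneg _)
    have hxynorm : ‖x - y‖ ≤ (2^ℓ:ℝ) * (1/2:ℝ)^rN := hnorm
    have hxy0 : (0:ℝ) ≤ ‖x - y‖ := norm_nonneg _
    calc c * ∑ j, ∑ k, |rht ℓ m D x j k - rht ℓ m D y j k|
        ≤ c * (Real.sqrt P * (2 * Real.sqrt P * ‖x - y‖)) :=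
          mul_le_mul_of_nonneg_left hchain hc0
      _ = (P * c) * (2 * ‖x - y‖) := by
          have hss : Real.sqrt P * Real.sqrt P = P := Real.mul_self_sqrt hP0
          calc c * (Real.sqrt P * (2 * Real.sqrt P * ‖x - y‖))
              = (Real.sqrt P * Real.sqrt P) * c * (2 * ‖x - y‖) := by ring
            _ = (P * c) * (2 * ‖x - y‖) := by rw [hss]
      _ ≤ 1 * (2 * ‖x - y‖) := by
          refine mul_le_mul_of_nonneg_right ?_ (by positivity)
          exact hcoef
      _ = 2 * ‖x - y‖ := by ring
      _ ≤ 2 * ((2^ℓ:ℝ) * (1/2:ℝ)^rN) := by linarith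
      _ ≤ 2 * (nuC ℓ ε / 16) := by linarith [hkey]
      _ ≤ nuC ℓ ε / 4 := by linarith [hν.le]
end
end
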